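/- Let G be a finite simple graph, let v be a vertex of G of degree d ≥ 1, and let p : V(G) → ℝ be a probability distribution on the vertices of G (p is nonnegative and sums to 1). Then there exists a vertex w in the closed neighborhood of v (i.e., w = v or w adjacent to v) such that Σ_{x ∈ N(w)} p(x) ≥ √d · p(w). -/

import Mathlib

namespace CopKiller

variable {V : Type*}

/-- A cop strategy: an initial vertex, and a move function that, given the history of
states `(cop position, killer position)` so far (most recent first), produces the cop's
next vertex. -/
structure CopStrategy (V : Type*) where
  init : V
  move : List (V × V) → V

/-- A killer strategy: an initial vertex chosen knowing the cop's initial vertex, and a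
move function that, given the history of states so far (most recent first) and the cop's
just-chosen new position, produces the killer's next vertex. -/
structure KillerStrategy (V : Type*) where
  init : V → V
  move : List (V × V) → V → V

/-- The history of states after `n` full rounds, most recent first. -/
def hist (cs : CopStrategy V) (ks : KillerStrategy V) : ℕ → List (V × V)
  | 0 => [(cs.init, ks.init cs.init)]
  | n + 1 =>
      let h := hist cs ks n
      let c := cs.move h
      (c, ks.move h c) :: h

/-- The cop's position after the cop's `n`-th move (`n = 0` is the initial position). -/
def copPos (cs : CopStrategy V) (ks : KillerStrategy V) : ℕ → V
  | 0 => cs.init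
  | n + 1 => cs.move (hist cs ks n)

/-- The killer's position after the killer's `n`-th move (`n = 0` is the initial position). -/
def killerPos (cs : CopStrategy V) (ks : KillerStrategy V) : ℕ → V
  | 0 => ks.init cs.init
  | n + 1 =>
      let h := hist cs ks n
      ks.move h (cs.move h)

/-- A cop strategy is legal on `G` when every move goes to a vertex adjacent to the cop's
current vertex. -/
def CopLegal (G : SimpleGraph V) (cs : CopStrategy V) : Prop :=
  ∀ (h : List (V × V)) (s : V × V), h.head? = some s → G.Adj s.1 (cs.move h)

/-- A killer strategy is legal on `G` when every move goes to a vertex adjacent to the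
killer's current vertex. -/
def KillerLegal (G : SimpleGraph V) (ks : KillerStrategy V) : Prop :=
  ∀ (h : List (V × V)) (s : V × V), h.head? = some s → ∀ c : V, G.Adj s.2 (ks.move h c)

/-- The cop wins the play: on some cop move the cop lands on the killer's current vertex,
the killer not having captured the cop on any earlier killer move. -/
def CopWinsPlay (cs : CopStrategy V) (ks : KillerStrategy V) : Prop :=
  ∃ n : ℕ, copPos cs ks (n + 1) = killerPos cs ks n ∧
    ∀ m : ℕ, 1 ≤ m → m ≤ n → killerPos cs ks m ≠ copPos cs ks m

/-- The killer wins the play: on some killer move the killer lands on the cop's current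
vertex, the cop not having captured the killer on any earlier or simultaneous cop move. -/
def KillerWinsPlay (cs : CopStrategy V) (ks : KillerStrategy V) : Prop :=
  ∃ n : ℕ, 1 ≤ n ∧ killerPos cs ks n = copPos cs ks n ∧
    ∀ m : ℕ, 1 ≤ m → m ≤ n → copPos cs ks m ≠ killerPos cs ks (m - 1)

/-- `G` is cop-win: the cop has a legal strategy winning against every legal killer strategy. -/
def CopWin (G : SimpleGraph V) : Prop :=
  ∃ cs : CopStrategy V, CopLegal G cs ∧
    ∀ ks : KillerStrategy V, KillerLegal G ks → CopWinsPlay cs ks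

/-- `G` is killer-win: the killer has a legal strategy winning against every legal cop strategy. -/
def KillerWin (G : SimpleGraph V) : Prop :=
  ∃ ks : KillerStrategy V, KillerLegal G ks ∧
    ∀ cs : CopStrategy V, CopLegal G cs → KillerWinsPlay cs ks

/-- `G` is a stalemate: neither player has a winning strategy. -/
def Stalemate (G : SimpleGraph V) : Prop :=
  ¬ CopWin G ∧ ¬ KillerWin G

/-- `G` has a universal vertex: a vertex adjacent to every other vertex. -/
def HasUniversalVertex (G : SimpleGraph V) : Prop :=
  ∃ v : V, ∀ w : V, w ≠ v → G.Adj v w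

/-- `G` is a star: there is a vertex `v` such that the edges of `G` are exactly the pairs
containing `v`. -/
def IsStar (G : SimpleGraph V) : Prop :=
  ∃ v : V, ∀ a b : V, G.Adj a b ↔ (a = v ∨ b = v) ∧ a ≠ b

end CopKiller

namespace CopKiller

/-- The tensor (categorical) product of two simple graphs:
`(g,h) ∼ (g',h')` iff `g ∼ g'` and `h ∼ h'`. -/
def tensorProd {α β : Type*} (G : SimpleGraph α) (H : SimpleGraph β) :
    SimpleGraph (α × β) where
  Adj x y := G.Adj x.1 y.1 ∧ H.Adj x.2 y.2
  symm := by
    refine ⟨?_⟩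
    rintro x y ⟨h1, h2⟩
    exact ⟨h1.symm, h2.symm⟩
  loopless := by
    refine ⟨?_⟩
    rintro x ⟨h1, _⟩
    exact G.loopless.irrefl x.1 h1

/-- The strong product of two simple graphs: distinct `(g,h)` and `(g',h')` are adjacent
iff (`g = g'` or `g ∼ g'`) and (`h = h'` or `h ∼ h'`). -/
def strongProd {α β : Type*} (G : SimpleGraph α) (H : SimpleGraph β) :
    SimpleGraph (α × β) where
  Adj x y := x ≠ y ∧ (x.1 = y.1 ∨ G.Adj x.1 y.1) ∧ (x.2 = y.2 ∨ H.Adj x.2 y.2)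
  symm := by
    refine ⟨?_⟩
    rintro x y ⟨hne, h1, h2⟩
    exact ⟨hne.symm, h1.imp (fun e => e.symm) (fun a => a.symm),
      h2.imp (fun e => e.symm) (fun a => a.symm)⟩
  loopless := by
    refine ⟨?_⟩
    rintro x ⟨hne, -, -⟩
    exact hne rfl

open scoped Classical in
/-- The probability that the Erdős–Rényi random graph `G(n,p)` (each of the `n.choose 2`
possible edges present independently with probability `p`) satisfies the property `A`. -/
noncomputable def erProb (n : ℕ) (p : ℝ) (A : SimpleGraph (Fin n) → Prop) : ℝ :=
  ∑ G : SimpleGraph (Fin n),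
    if A G then p ^ G.edgeSet.ncard * (1 - p) ^ (n.choose 2 - G.edgeSet.ncard) else 0

/-- The number of cycles of length `n` in `G`, i.e. the number of subgraphs of `G`
isomorphic to the cycle graph `C_n`. -/
noncomputable def numCycles {V : Type*} (G : SimpleGraph V) (n : ℕ) : ℕ :=
  {H : G.Subgraph | Nonempty (H.coe ≃g SimpleGraph.cycleGraph n)}.ncard

end CopKiller

/-!
If every vertex `w` of the closed neighbourhood of `v` had `∑_{x ∼ w} p x < √d * p w`, then,
since `v` is a neighbour of each of its `d` neighbours `u`,
`d * p v ≤ ∑_{u ∼ v} ∑_{x ∼ u} p x < √d * ∑_{u ∼ v} p u < √d * √d * p v = d * p v`.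
-/

open Finset

namespace SimpleGraph

variable {V : Type*} (G : SimpleGraph V)

theorem sum_indicator_neighborSet [Fintype V] (w : V) [Fintype (G.neighborSet w)] (p : V → ℝ) :
    ∑ x, (G.neighborSet w).indicator p x = ∑ x ∈ G.neighborFinset w, p x := by
  rw [← coe_neighborFinset, sum_indicator_subset p (subset_univ _)]

variable [LocallyFinite G]

theorem degree_mul_le_sum_sum_neighborFinset (v : V) {p : V → ℝ} (hp : 0 ≤ p) :
    G.degree v * p v ≤ ∑ u ∈ G.neighborFinset v, ∑ x ∈ G.neighborFinset u, p x := by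
  rw [← card_neighborFinset_eq_degree, ← nsmul_eq_mul, ← sum_const]
  refine sum_le_sum fun u hu => single_le_sum (fun x _ => hp x) ?_
  exact (G.mem_neighborFinset u v).2 ((G.mem_neighborFinset v u).1 hu).symm

theorem exists_sqrt_degree_mul_le_sum_neighborFinset {v : V} (hv : 0 < G.degree v)
    {p : V → ℝ} (hp : 0 ≤ p) :
    ∃ w, (w = v ∨ G.Adj v w) ∧ √(G.degree v) * p w ≤ ∑ x ∈ G.neighborFinset w, p x := by
  by_contra! h
  set d : ℝ := (G.degree v : ℝ)
  have hd : 0 < √d := Real.sqrt_pos.2 (by simpa [d] using hv)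
  have hne : (G.neighborFinset v).Nonempty := by
    rwa [← card_pos, card_neighborFinset_eq_degree]
  have hlower := G.degree_mul_le_sum_sum_neighborFinset v hp
  have hupper := calc ∑ u ∈ G.neighborFinset v, ∑ x ∈ G.neighborFinset u, p x
      < ∑ u ∈ G.neighborFinset v, √d * p u :=
        sum_lt_sum_of_nonempty hne fun u hu => h u (.inr ((G.mem_neighborFinset v u).1 hu))
    _ = √d * ∑ u ∈ G.neighborFinset v, p u := (mul_sum ..).symm
    _ < √d * (√d * p v) := mul_lt_mul_of_pos_left (h v (.inl rfl)) hd
    _ = d * p v := by rw [← mul_assoc, Real.mul_self_sqrt (Nat.cast_nonneg _)]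
  exact lt_irrefl _ (hlower.trans_lt hupper)

end SimpleGraph

theorem closed_neighborhood_sqrt_bound_general {V : Type*} [Fintype V] (G : SimpleGraph V)
    (v : V) (d : ℕ) (hd : 1 ≤ d) (hdeg : (G.neighborSet v).ncard = d)
    (p : V → ℝ) (hp0 : ∀ x : V, 0 ≤ p x) :
    ∃ w : V, (w = v ∨ G.Adj v w) ∧
      Real.sqrt d * p w ≤ ∑ x : V, (G.neighborSet w).indicator p x := by
  classical
  have hdegree : G.degree v = d := by
    rw [← hdeg, ← SimpleGraph.card_neighborSet_eq_degree, Set.ncard_eq_toFinset_card',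
      Set.toFinset_card]
  obtain ⟨w, hw, hle⟩ := G.exists_sqrt_degree_mul_le_sum_neighborFinset (hdegree ▸ hd) hp0
  exact ⟨w, hw, by rwa [G.sum_indicator_neighborSet, ← hdegree]⟩

/-- If `v` is a vertex of degree `d ≥ 1` of a finite simple graph `G` and
`p` is a probability distribution on the vertices, then some vertex `w` in the closed
neighborhood of `v` satisfies `Σ_{x ∈ N(w)} p(x) ≥ √d · p(w)`. -/
theorem closed_neighborhood_sqrt_bound {V : Type*} [Fintype V] (G : SimpleGraph V)
    (v : V) (d : ℕ) (hd : 1 ≤ d) (hdeg : (G.neighborSet v).ncard = d)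
    (p : V → ℝ) (hp0 : ∀ x : V, 0 ≤ p x) (hp1 : ∑ x : V, p x = 1) :
    ∃ w : V, (w = v ∨ G.Adj v w) ∧
      Real.sqrt d * p w ≤ ∑ x : V, (G.neighborSet w).indicator p x :=
  closed_neighborhood_sqrt_bound_general G v d hd hdeg p hp0
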